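/- arXiv:2001.02887 — 3 statements merged into one kernel-verified Lean document; each statement's English description precedes it below -/
import Mathlib

section
/- Let N ≥ 2 and, for j = 1, ..., N, let p_j > 1, 0 < q_j < p_j and θ_j > 0 be real numbers, let p be the harmonic mean of p_1, …, p_N with p < N, and let m > 1 satisfy m > 𝔪_j := ((p_j − q_j)/q_j)(θ_j p_j/(p_j − q_j) − p). If R_j := [1 − q_j/p_j − (θ_j − m q_j/p_j)(1/p − 1/(N p_j))]^{−1} > 0, then (θ_j − m q_j/p_j)·R_j/N < p_j. -/
/-- If m > 𝔪_j and R_j > 0, then (θ_j − m q_j/p_j) R_j / N < p_j. -/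
theorem exponent_lt_pj (N : ℕ) (hN : 2 ≤ N) (pp : Fin N → ℝ)
    (hpp : ∀ k, 1 < pp k) (p : ℝ) (hp : p = (N : ℝ) / ∑ k, 1 / pp k)
    (hpN : p < N) (j : Fin N) (q θ m R : ℝ)
    (hq : 0 < q) (hqp : q < pp j) (hθ : 0 < θ) (hm : 1 < m)
    (hmfrak : m > (pp j - q) / q * (θ * pp j / (pp j - q) - p))
    (hR : R = (1 - q / pp j - (θ - m * q / pp j) * (1 / p - 1 / (N * pp j)))⁻¹)
    (hRpos : 0 < R) :
    (θ - m * q / pp j) * R / N < pp j := by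
  have hP : (0:ℝ) < pp j := lt_trans one_pos (hpp j)
  have hPq : (0:ℝ) < pp j - q := by linarith
  have hNR : (0:ℝ) < (N:ℝ) := by positivity
  have hsum : (0:ℝ) < ∑ k, 1 / pp k := by
    apply Finset.sum_pos
    · intro k _
      have := hpp k
      positivity
    · have : Nonempty (Fin N) := Fin.pos_iff_nonempty.mp (by omega)
      exact Finset.univ_nonempty
  have hp0 : 0 < p := by rw [hp]; positivity
  -- key: a * P < p * (P - q) where a = θ - m*q/P
  have key : (θ - m * q / pp j) * pp j < p * (pp j - q) := by
    rw [gt_iff_lt, div_mul_eq_mul_div, div_lt_iff₀ hq] at hmfrak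
    have heq : (pp j - q) * (θ * pp j / (pp j - q) - p)
        = θ * pp j - p * (pp j - q) := by
      field_simp
    rw [heq] at hmfrak
    have ha : (θ - m * q / pp j) * pp j = θ * pp j - m * q := by
      field_simp
    rw [ha]; linarith
  set D := 1 - q / pp j - (θ - m * q / pp j) * (1 / p - 1 / (N * pp j)) with hD
  have hDpos : 0 < D := inv_pos.mp (hR ▸ hRpos)
  have hDeq : pp j * (N:ℝ) * D
      = (N:ℝ) * pp j - (N:ℝ) * q - (θ - m * q / pp j) * ((N:ℝ) * pp j / p)
        + (θ - m * q / pp j) := by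
    rw [hD]
    field_simp
    ring
  have hstep : (θ - m * q / pp j) * ((N:ℝ) * pp j / p) < (N:ℝ) * (pp j - q) := by
    have h1 : (θ - m * q / pp j) * pp j / p < pp j - q := by
      rw [div_lt_iff₀ hp0]
      nlinarith
    have h2 : (θ - m * q / pp j) * ((N:ℝ) * pp j / p)
        = (N:ℝ) * ((θ - m * q / pp j) * pp j / p) := by ring
    rw [h2]
    exact (mul_lt_mul_iff_right₀ hNR).mpr h1
  have hkey2 : θ - m * q / pp j < pp j * (N:ℝ) * D := by
    rw [hDeq]; nlinarith
  rw [hR, div_lt_iff₀ hNR, ← div_eq_mul_inv, div_lt_iff₀ hDpos]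
  nlinarith [hkey2]
end

section
/- Let Ω ⊂ ℝ^N be measurable with finite measure and let u ∈ L^m(Ω) for some m ≥ 1. Define μ(h) = meas({|u| ≥ h}) for h > 0. Suppose there exist constants C > 0, γ > 1 and m ≥ 1 such that μ(l) ≤ C·(l − h)^{−m}·μ(h)^γ for all l > h > 0. Then u ∈ L^∞(Ω); more precisely there exists d > 0 with μ(d) = 0. -/
/-!
Along the levels `kₙ = h₀ + d - d / 2ⁿ` the decay inequality turns a geometric bound
`φ kₙ ≤ φ h₀ rⁿ` with `r = 2^(-m/(γ-1))` into the next one, provided the total jump `d`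
is large enough that `C d^(-m) φ(h₀)^γ = φ(h₀) r^γ`. Since `φ` is nonincreasing,
`φ (h₀ + d) ≤ φ h₀ rⁿ → 0`.
-/

open MeasureTheory Filter Topology

namespace Stampacchia

variable {φ : ℝ → ℝ} {C m γ h₀ d r : ℝ}

lemma apply_dyadic_level_le (hφ : ∀ x, 0 ≤ φ x)
    (hdecay : ∀ h l, h₀ ≤ h → h < l → φ l ≤ C * (l - h) ^ (-m) * φ h ^ γ)
    (hC : 0 ≤ C) (hγ : 0 ≤ γ) (hd : 0 < d) (hr : 0 ≤ r)
    (hr_fixed : 2 ^ m * r ^ γ = r) (hd_crit : C * d ^ (-m) * φ h₀ ^ γ = φ h₀ * r ^ γ)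
    (n : ℕ) : φ (h₀ + d - d / 2 ^ n) ≤ φ h₀ * r ^ n := by
  induction n with
  | zero => simp
  | succ n ih =>
    have hstep : h₀ + d - d / 2 ^ (n + 1) - (h₀ + d - d / 2 ^ n) = d / 2 ^ (n + 1) := by
      field_simp; ring
    have hlevel : h₀ ≤ h₀ + d - d / 2 ^ n := by
      have : d / 2 ^ n ≤ d := div_le_self hd.le (one_le_pow₀ one_le_two)
      linarith
    have hgap : (d / 2 ^ (n + 1)) ^ (-m) = d ^ (-m) * (2 ^ m) ^ (n + 1) := by
      rw [Real.div_rpow hd.le (by positivity),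
        Real.rpow_neg (by positivity : (0 : ℝ) ≤ 2 ^ (n + 1)), ← Real.rpow_pow_comm zero_le_two,
        div_inv_eq_mul]
    have hpow : (φ h₀ * r ^ n) ^ γ = φ h₀ ^ γ * (r ^ γ) ^ n := by
      rw [Real.mul_rpow (hφ _) (by positivity), Real.rpow_pow_comm hr]
    calc φ (h₀ + d - d / 2 ^ (n + 1))
        ≤ C * (d / 2 ^ (n + 1)) ^ (-m) * φ (h₀ + d - d / 2 ^ n) ^ γ := by
          have hpos : 0 < d / 2 ^ (n + 1) := by positivity
          simpa only [hstep] using hdecay _ (h₀ + d - d / 2 ^ (n + 1)) hlevel (by linarith)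
      _ ≤ C * (d / 2 ^ (n + 1)) ^ (-m) * (φ h₀ * r ^ n) ^ γ := by
          gcongr
          exact hφ _
      _ = (C * d ^ (-m) * φ h₀ ^ γ) * (2 ^ m) ^ (n + 1) * (r ^ γ) ^ n := by
          rw [hgap, hpow]; ring
      _ = φ h₀ * (2 ^ m * r ^ γ) ^ (n + 1) := by
          rw [hd_crit]; ring
      _ = φ h₀ * r ^ (n + 1) := by
          rw [hr_fixed]

lemma eq_zero_of_superlinear_decay (hanti : Antitone φ) (hφ : ∀ x, 0 ≤ φ x)
    (hdecay : ∀ h l, h₀ ≤ h → h < l → φ l ≤ C * (l - h) ^ (-m) * φ h ^ γ)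
    (hC : 0 < C) (hm : 0 < m) (hγ : 1 < γ) :
    φ (h₀ + C ^ m⁻¹ * φ h₀ ^ ((γ - 1) / m) * 2 ^ (γ / (γ - 1))) = 0 := by
  set a := φ h₀
  set d := C ^ m⁻¹ * a ^ ((γ - 1) / m) * 2 ^ (γ / (γ - 1)) with hd_def
  have hγ1 : 0 < γ - 1 := sub_pos.2 hγ
  rcases (show 0 ≤ a from hφ h₀).eq_or_lt with ha | ha
  · rw [hd_def, ← ha, Real.zero_rpow (div_pos hγ1 hm).ne', mul_zero, zero_mul, add_zero]
    exact ha.symm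
  set r : ℝ := 2 ^ (-(m / (γ - 1))) with hr_def
  have hd : 0 < d := by positivity
  have hr_lt_one : r < 1 := Real.rpow_lt_one_of_one_lt_of_neg one_lt_two (by
    have := div_pos hm hγ1; linarith)
  have hr_fixed : 2 ^ m * r ^ γ = r := by
    rw [hr_def, ← Real.rpow_mul zero_le_two, ← Real.rpow_add two_pos]
    congr 1
    field_simp
    ring
  have hdm : d ^ m = C * a ^ (γ - 1) * 2 ^ (γ / (γ - 1) * m) := by
    rw [hd_def, Real.mul_rpow (by positivity) (by positivity),
      Real.mul_rpow (by positivity) (by positivity), ← Real.rpow_mul hC.le, ← Real.rpow_mul ha.le,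
      ← Real.rpow_mul zero_le_two,
      inv_mul_cancel₀ hm.ne', Real.rpow_one, div_mul_cancel₀ _ hm.ne']
  have hd_crit : C * d ^ (-m) * a ^ γ = a * r ^ γ := by
    rw [Real.rpow_neg hd.le, hdm, hr_def, ← Real.rpow_mul zero_le_two,
      show -(m / (γ - 1)) * γ = -(γ / (γ - 1) * m) by ring, Real.rpow_neg zero_le_two,
      ← sub_add_cancel γ 1, Real.rpow_add_one ha.ne', add_sub_cancel_right]
    field_simp
  have hbound : ∀ n : ℕ, φ (h₀ + d) ≤ a * r ^ n := fun n =>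
    (hanti (by linarith [show 0 ≤ d / 2 ^ n by positivity])).trans
      (apply_dyadic_level_le hφ hdecay hC.le (by linarith) hd (by positivity) hr_fixed hd_crit n)
  have hlim : Tendsto (fun n : ℕ => a * r ^ n) atTop (𝓝 0) := by
    simpa using (tendsto_pow_atTop_nhds_zero_of_lt_one (by positivity) hr_lt_one).const_mul a
  exact le_antisymm (ge_of_tendsto' hlim hbound) (hφ _)

end Stampacchia

open Stampacchia in
theorem stampacchia_vanishing_general (N : ℕ) (Ω : Set (EuclideanSpace ℝ (Fin N)))
    (hfin : volume Ω < ⊤)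
    (u : EuclideanSpace ℝ (Fin N) → ℝ)
    (m γ C : ℝ) (hm : 1 ≤ m) (hγ : 1 < γ) (hC : 0 < C)
    (hdecay : ∀ h l : ℝ, 0 < h → h < l →
      (volume {x ∈ Ω | l ≤ |u x|}).toReal ≤
        C * (l - h) ^ (-m) * (volume {x ∈ Ω | h ≤ |u x|}).toReal ^ γ) :
    ∃ d > (0 : ℝ), volume {x ∈ Ω | d ≤ |u x|} = 0 := by
  have hlevel_ne_top (h : ℝ) : volume {x ∈ Ω | h ≤ |u x|} ≠ ⊤ :=
    measure_ne_top_of_subset (Set.sep_subset _ _) hfin.ne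
  have hanti : Antitone fun h : ℝ => (volume {x ∈ Ω | h ≤ |u x|}).toReal := fun a b hab =>
    ENNReal.toReal_mono (hlevel_ne_top a) (measure_mono fun x hx => ⟨hx.1, hab.trans hx.2⟩)
  have hvanish := eq_zero_of_superlinear_decay hanti (fun _ => ENNReal.toReal_nonneg)
    (fun h l h1 hhl => hdecay h l (one_pos.trans_le h1) hhl) hC (by linarith) hγ (h₀ := 1)
  exact ⟨_, by positivity,
    ((ENNReal.toReal_eq_zero_iff _).mp hvanish).resolve_right (hlevel_ne_top _)⟩

/-- Stampacchia iteration lemma: superlinear decay of the level-set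
function with exponent γ > 1 forces it to vanish at a finite level. -/
theorem stampacchia_vanishing (N : ℕ) (Ω : Set (EuclideanSpace ℝ (Fin N)))
    (hΩ : MeasurableSet Ω) (hfin : volume Ω < ⊤)
    (u : EuclideanSpace ℝ (Fin N) → ℝ)
    (m γ C : ℝ) (hm : 1 ≤ m) (hγ : 1 < γ) (hC : 0 < C)
    (hum : IntegrableOn (fun x => |u x| ^ m) Ω volume)
    (hdecay : ∀ h l : ℝ, 0 < h → h < l →
      (volume {x ∈ Ω | l ≤ |u x|}).toReal ≤
        C * (l - h) ^ (-m) * (volume {x ∈ Ω | h ≤ |u x|}).toReal ^ γ) :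
    ∃ d > (0 : ℝ), volume {x ∈ Ω | d ≤ |u x|} = 0 :=
  stampacchia_vanishing_general N Ω hfin u m γ C hm hγ hC hdecay
end

section
/- Let Ω ⊂ ℝ^N be measurable with finite measure, u ∈ L^m(Ω) with m > 1, and μ(h) = meas({|u| ≥ h}). Suppose μ(l) ≤ C·(l−h)^{−m}·μ(h)^γ for all l > h > 0, with C > 0 and γ ∈ (0,1). Then u ∈ L^{m₁}(Ω) where m₁ = 2m/(2 − γ) > m. -/
/-!
Halving the level: with `h = l / 2` the decay inequality turns a bound `μ(h) ≤ A h^{-a}` into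
`μ(l) ≲ l^{-(m + a γ)}`. Starting from `μ ≤ |Ω|` and applying this twice gives
`μ(l) ≲ l^{-m(1+γ)}`, and by the layer-cake formula `|u|^p` is integrable for every
`p < m(1+γ)`, in particular for `p = 2m/(2-γ)`.
-/

open MeasureTheory Set

def StampacchiaDecay (φ : ℝ → ℝ) (C m γ : ℝ) : Prop :=
  ∀ h l : ℝ, 0 < h → h < l → φ l ≤ C * (l - h) ^ (-m) * φ h ^ γ

namespace StampacchiaDecay

variable {φ : ℝ → ℝ} {C m γ : ℝ}

theorem le_mul_rpow_of_le_mul_rpow (hdecay : StampacchiaDecay φ C m γ) (hφ : ∀ h, 0 ≤ φ h)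
    (hC : 0 ≤ C) (hγ : 0 ≤ γ) {A a : ℝ} (hA : 0 ≤ A)
    (hφA : ∀ h, 0 < h → φ h ≤ A * h ^ (-a)) {l : ℝ} (hl : 0 < l) :
    φ l ≤ C * 2 ^ m * (A * 2 ^ a) ^ γ * l ^ (-(m + a * γ)) := by
  have hl2 : 0 < l / 2 := half_pos hl
  have half_rpow_neg (s : ℝ) : (l / 2) ^ (-s) = 2 ^ s * l ^ (-s) := by
    rw [Real.div_rpow hl.le zero_le_two, Real.rpow_neg zero_le_two, div_inv_eq_mul, mul_comm]
  calc φ l ≤ C * (l - l / 2) ^ (-m) * φ (l / 2) ^ γ := hdecay _ _ hl2 (half_lt_self hl)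
    _ ≤ C * (l / 2) ^ (-m) * (A * (l / 2) ^ (-a)) ^ γ := by
      rw [sub_half]
      gcongr
      exacts [hφ _, hφA _ hl2]
    _ = C * 2 ^ m * (A * 2 ^ a) ^ γ * l ^ (-(m + a * γ)) := by
      rw [half_rpow_neg, half_rpow_neg, ← mul_assoc A,
        Real.mul_rpow (by positivity) (Real.rpow_nonneg hl.le _), ← Real.rpow_mul hl.le,
        neg_add, Real.rpow_add hl, neg_mul]
      ring

theorem exists_le_mul_rpow (hdecay : StampacchiaDecay φ C m γ) (hφ : ∀ h, 0 ≤ φ h)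
    {V : ℝ} (hφV : ∀ h, φ h ≤ V) (hC : 0 ≤ C) (hγ : 0 ≤ γ) :
    ∃ K, ∀ l, 0 < l → φ l ≤ K * l ^ (-(m + m * γ)) := by
  have hV : 0 ≤ V := (hφ 0).trans (hφV 0)
  have hφm : ∀ l, 0 < l → φ l ≤ C * 2 ^ m * V ^ γ * l ^ (-m) := fun l hl => by
    simpa using hdecay.le_mul_rpow_of_le_mul_rpow hφ hC hγ hV (a := 0)
      (fun h _ => by simpa using hφV h) hl
  exact ⟨_, fun l hl => hdecay.le_mul_rpow_of_le_mul_rpow hφ hC hγ (by positivity) hφm hl⟩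

end StampacchiaDecay

theorem integrable_rpow_of_meas_le_le_mul_rpow {α : Type*} [MeasurableSpace α]
    {μ : Measure α} [IsFiniteMeasure μ] {f : α → ℝ} (hf : AEMeasurable f μ) (hf0 : 0 ≤ᵐ[μ] f)
    {p q K : ℝ} (hp : 0 < p) (hpq : p < q)
    (hdist : ∀ t, 1 < t → μ {x | t ≤ f x} ≤ ENNReal.ofReal (K * t ^ (-q))) :
    Integrable (fun x => f x ^ p) μ := by
  refine ⟨(hf.pow_const p).aestronglyMeasurable, ?_⟩
  rw [hasFiniteIntegral_iff_ofReal (hf0.mono fun x hx => Real.rpow_nonneg hx p),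
    lintegral_rpow_eq_lintegral_meas_le_mul μ hf0 hf hp, ← Ioc_union_Ioi_eq_Ioi zero_le_one,
    lintegral_union measurableSet_Ioi (Ioc_disjoint_Ioi le_rfl)]
  refine ENNReal.mul_lt_top ENNReal.ofReal_lt_top (ENNReal.add_lt_top.2 ⟨?_, ?_⟩)
  · calc ∫⁻ t in Ioc 0 1, μ {x | t ≤ f x} * ENNReal.ofReal (t ^ (p - 1))
        ≤ ∫⁻ t in Ioc 0 1, μ univ * ENNReal.ofReal (t ^ (p - 1)) :=
          setLIntegral_mono (by fun_prop) fun t _ => by gcongr; exact subset_univ _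
      _ = μ univ * ∫⁻ t in Ioc 0 1, ENNReal.ofReal (t ^ (p - 1)) :=
          lintegral_const_mul _ (by fun_prop)
      _ < ⊤ := ENNReal.mul_lt_top (measure_lt_top _ _)
          ((intervalIntegrable_iff_integrableOn_Ioc_of_le zero_le_one).1
            (intervalIntegral.intervalIntegrable_rpow' (by linarith))).lintegral_lt_top
  · calc ∫⁻ t in Ioi 1, μ {x | t ≤ f x} * ENNReal.ofReal (t ^ (p - 1))
        ≤ ∫⁻ t in Ioi 1, ENNReal.ofReal (K * t ^ (p - 1 - q)) := by
          refine setLIntegral_mono (by fun_prop) fun t (ht : 1 < t) => ?_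
          have ht0 : 0 < t := one_pos.trans ht
          calc μ {x | t ≤ f x} * ENNReal.ofReal (t ^ (p - 1))
              ≤ ENNReal.ofReal (K * t ^ (-q)) * ENNReal.ofReal (t ^ (p - 1)) := by
                gcongr; exact hdist t ht
            _ = ENNReal.ofReal (K * t ^ (p - 1 - q)) := by
                rw [← ENNReal.ofReal_mul' (Real.rpow_nonneg ht0.le _), mul_assoc,
                  ← Real.rpow_add ht0, neg_add_eq_sub]
      _ < ⊤ :=
          ((integrableOn_Ioi_rpow_of_lt (by linarith) one_pos).const_mul K).lintegral_lt_top

theorem stampacchia_gain_general (N : ℕ) (Ω : Set (EuclideanSpace ℝ (Fin N)))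
    (hΩ : MeasurableSet Ω) (hfin : volume Ω < ⊤)
    (u : EuclideanSpace ℝ (Fin N) → ℝ) (hu : AEMeasurable u (volume.restrict Ω))
    (m γ C : ℝ) (hm : 1 < m) (hγ0 : 0 < γ) (hγ1 : γ < 1) (hC : 0 < C)
    (hdecay : ∀ h l : ℝ, 0 < h → h < l →
      (volume {x ∈ Ω | l ≤ |u x|}).toReal ≤
        C * (l - h) ^ (-m) * (volume {x ∈ Ω | h ≤ |u x|}).toReal ^ γ) :
    2 * m / (2 - γ) > m ∧
      IntegrableOn (fun x => |u x| ^ (2 * m / (2 - γ))) Ω volume := by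
  have h2γ : 0 < 2 - γ := by linarith
  have hgain : m < 2 * m / (2 - γ) := by rw [lt_div_iff₀ h2γ]; nlinarith
  -- `2 < (1 + γ) (2 - γ)` amounts to `γ² < γ`
  have hbelow : 2 * m / (2 - γ) < m + m * γ := by
    rw [div_lt_iff₀ h2γ]
    nlinarith [mul_pos (mul_pos hγ0 (sub_pos.2 hγ1)) (by linarith : 0 < m)]
  refine ⟨hgain, ?_⟩
  have : IsFiniteMeasure (volume.restrict Ω) := isFiniteMeasure_restrict.2 hfin.ne
  have hlevel (t : ℝ) : volume {x ∈ Ω | t ≤ |u x|} ≠ ⊤ :=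
    ((measure_mono (sep_subset _ _)).trans_lt hfin).ne
  obtain ⟨K, hK⟩ := StampacchiaDecay.exists_le_mul_rpow
    (φ := fun t => (volume {x ∈ Ω | t ≤ |u x|}).toReal) hdecay (fun _ => ENNReal.toReal_nonneg)
    (fun _ => ENNReal.toReal_mono hfin.ne (measure_mono (sep_subset _ _))) hC.le hγ0.le
  refine integrable_rpow_of_meas_le_le_mul_rpow (K := K) hu.abs
    (ae_of_all _ fun _ => abs_nonneg _) (by linarith) hbelow fun t ht => ?_
  calc volume.restrict Ω {x | t ≤ |u x|} = volume {x ∈ Ω | t ≤ |u x|} := by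
        rw [Measure.restrict_apply' hΩ, inter_comm]; rfl
    _ = ENNReal.ofReal (volume {x ∈ Ω | t ≤ |u x|}).toReal :=
        (ENNReal.ofReal_toReal (hlevel t)).symm
    _ ≤ ENNReal.ofReal (K * t ^ (-(m + m * γ))) :=
        ENNReal.ofReal_le_ofReal (hK t (one_pos.trans ht))

/-- Gain of integrability: if the level sets satisfy the decay inequality
with γ ∈ (0,1), then u ∈ L^{m₁} with m₁ = 2m/(2−γ) > m. -/
theorem stampacchia_gain (N : ℕ) (Ω : Set (EuclideanSpace ℝ (Fin N)))
    (hΩ : MeasurableSet Ω) (hfin : volume Ω < ⊤)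
    (u : EuclideanSpace ℝ (Fin N) → ℝ) (hu : AEMeasurable u (volume.restrict Ω))
    (m γ C : ℝ) (hm : 1 < m) (hγ0 : 0 < γ) (hγ1 : γ < 1) (hC : 0 < C)
    (hum : IntegrableOn (fun x => |u x| ^ m) Ω volume)
    (hdecay : ∀ h l : ℝ, 0 < h → h < l →
      (volume {x ∈ Ω | l ≤ |u x|}).toReal ≤
        C * (l - h) ^ (-m) * (volume {x ∈ Ω | h ≤ |u x|}).toReal ^ γ) :
    2 * m / (2 - γ) > m ∧
      IntegrableOn (fun x => |u x| ^ (2 * m / (2 - γ))) Ω volume :=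
  stampacchia_gain_general N Ω hΩ hfin u hu m γ C hm hγ0 hγ1 hC hdecay
end
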